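/- arXiv:1802.05844 — 2 statements merged into one kernel-verified Lean document; each statement's English description precedes it below -/
import Mathlib

section
/- Let M be a subset of the feature variables such that C is conditionally independent of all remaining features given M (Markov blanket property). Then for every subset S of features disjoint from M (i.e., S ⊆ F \ M), I(C; M) > I(C; S) unless I(C; M | S) = 0, and in all cases I(C; M) ≥ I(C; S). -/
open Finset

namespace PaperFS

variable {Ω : Type} [Fintype Ω]

/-- The (marginal) probability mass of `X = x` under the weight function `p`. -/
noncomputable def pmfOf {α : Type} [DecidableEq α] (p : Ω → ℝ) (X : Ω → α) (x : α) : ℝ :=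
  ∑ ω ∈ Finset.univ.filter (fun ω => X ω = x), p ω

/-- `p` is a probability mass function on the finite sample space `Ω`. -/
def IsPMF (p : Ω → ℝ) : Prop := (∀ ω, 0 ≤ p ω) ∧ ∑ ω, p ω = 1

/-- Mutual information `I(X;Y)` of discrete random variables. -/
noncomputable def MI {α β : Type} [Fintype α] [Fintype β] [DecidableEq α] [DecidableEq β]
    (p : Ω → ℝ) (X : Ω → α) (Y : Ω → β) : ℝ :=
  ∑ x : α, ∑ y : β,
    pmfOf p (fun ω => (X ω, Y ω)) (x, y) *
      Real.log (pmfOf p (fun ω => (X ω, Y ω)) (x, y) / (pmfOf p X x * pmfOf p Y y))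

/-- Conditional mutual information `I(X;Y|Z)` of discrete random variables. -/
noncomputable def CMI {α β γ : Type} [Fintype α] [Fintype β] [Fintype γ]
    [DecidableEq α] [DecidableEq β] [DecidableEq γ]
    (p : Ω → ℝ) (X : Ω → α) (Y : Ω → β) (Z : Ω → γ) : ℝ :=
  ∑ z : γ, ∑ x : α, ∑ y : β,
    pmfOf p (fun ω => (X ω, Y ω, Z ω)) (x, y, z) *
      Real.log ((pmfOf p Z z * pmfOf p (fun ω => (X ω, Y ω, Z ω)) (x, y, z)) /
        (pmfOf p (fun ω => (X ω, Z ω)) (x, z) * pmfOf p (fun ω => (Y ω, Z ω)) (y, z)))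

/-- Shannon entropy `H(X)`. -/
noncomputable def Ent {α : Type} [Fintype α] [DecidableEq α] (p : Ω → ℝ) (X : Ω → α) : ℝ :=
  -∑ x : α, pmfOf p X x * Real.log (pmfOf p X x)

/-- Conditional entropy `H(X|Y) = H(X) - I(X;Y)`. -/
noncomputable def CEnt {α β : Type} [Fintype α] [Fintype β] [DecidableEq α] [DecidableEq β]
    (p : Ω → ℝ) (X : Ω → α) (Y : Ω → β) : ℝ :=
  Ent p X - MI p X Y

/-- `X` and `Y` are (marginally) independent: `P(x,y) = P(x)P(y)`. -/
def Indep {α β : Type} [DecidableEq α] [DecidableEq β]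
    (p : Ω → ℝ) (X : Ω → α) (Y : Ω → β) : Prop :=
  ∀ x y, pmfOf p (fun ω => (X ω, Y ω)) (x, y) = pmfOf p X x * pmfOf p Y y

/-- `X` and `Y` are conditionally independent given `Z`:
for every `z` with `P(z) > 0`, `P(x,y|z) = P(x|z)P(y|z)`, written multiplicatively. -/
def CondIndep {α β γ : Type} [DecidableEq α] [DecidableEq β] [DecidableEq γ]
    (p : Ω → ℝ) (X : Ω → α) (Y : Ω → β) (Z : Ω → γ) : Prop :=
  ∀ x y z, 0 < pmfOf p Z z →
    pmfOf p Z z * pmfOf p (fun ω => (X ω, Y ω, Z ω)) (x, y, z) =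
      pmfOf p (fun ω => (X ω, Z ω)) (x, z) * pmfOf p (fun ω => (Y ω, Z ω)) (y, z)

/-- The joint random variable formed by the features indexed by the finite set `S`. -/
def restrict {ι α : Type} (F : ι → Ω → α) (S : Finset ι) (ω : Ω) : {i // i ∈ S} → α :=
  fun i => F i.1 ω

end PaperFS

open PaperFS

/-! Applying the chain rule `I(C; (A, B)) = I(C; B) + I(C; A | B)` to the pair `(M, S)` in both
orders gives `I(C; M) + I(C; S | M) = I(C; S) + I(C; M | S)`. The Markov blanket property makes
`I(C; S | M)` vanish, and `I(C; M | S) ≥ 0` follows by summing the pointwise Gibbs inequality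
`q - r ≤ q log (q / r)`. -/

open Real

namespace PaperFS

variable {Ω α β γ : Type} [Fintype Ω] [DecidableEq α] [DecidableEq β] [DecidableEq γ]
  {p : Ω → ℝ}

lemma pmfOf_nonneg (hp : ∀ ω, 0 ≤ p ω) (X : Ω → α) (x : α) : 0 ≤ pmfOf p X x :=
  sum_nonneg fun ω _ => hp ω

lemma pmfOf_mono (hp : ∀ ω, 0 ≤ p ω) {X : Ω → α} {Y : Ω → β} {x : α} {y : β}
    (h : ∀ ω, X ω = x → Y ω = y) : pmfOf p X x ≤ pmfOf p Y y :=
  sum_le_sum_of_subset_of_nonneg (fun ω => by simpa using h ω) fun ω _ _ => hp ω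

lemma pmfOf_congr {X : Ω → α} {Y : Ω → β} {x : α} {y : β}
    (h : ∀ ω, X ω = x ↔ Y ω = y) : pmfOf p X x = pmfOf p Y y := by
  unfold pmfOf
  rw [filter_congr fun ω _ => h ω]

lemma sum_pmfOf_pair_right [Fintype β] (X : Ω → α) (Y : Ω → β) (x : α) :
    ∑ y, pmfOf p (fun ω => (X ω, Y ω)) (x, y) = pmfOf p X x := by
  unfold pmfOf
  rw [← sum_fiberwise _ Y p]
  refine sum_congr rfl fun y _ => ?_
  rw [filter_filter]
  simp only [Prod.ext_iff]

lemma sum_pmfOf_pair_left [Fintype α] (X : Ω → α) (Y : Ω → β) (y : β) :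
    ∑ x, pmfOf p (fun ω => (X ω, Y ω)) (x, y) = pmfOf p Y y := by
  rw [← sum_pmfOf_pair_right Y X y]
  exact sum_congr rfl fun x _ => pmfOf_congr fun ω => by simp only [Prod.ext_iff]; tauto

lemma sum_pmfOf_triple_mid [Fintype β] (X : Ω → α) (Y : Ω → β) (Z : Ω → γ) (x : α) (z : γ) :
    ∑ y, pmfOf p (fun ω => (X ω, Y ω, Z ω)) (x, y, z) = pmfOf p (fun ω => (X ω, Z ω)) (x, z) := by
  rw [← sum_pmfOf_pair_right (fun ω => (X ω, Z ω)) Y (x, z)]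
  exact sum_congr rfl fun y _ => pmfOf_congr fun ω => by simp only [Prod.ext_iff]; tauto

lemma pmfOf_eq_zero_of_imp (hp : ∀ ω, 0 ≤ p ω) {X : Ω → α} {Y : Ω → β} {x : α} {y : β}
    (h : ∀ ω, X ω = x → Y ω = y) (hy : pmfOf p Y y = 0) : pmfOf p X x = 0 :=
  le_antisymm (hy ▸ pmfOf_mono hp h) (pmfOf_nonneg hp X x)

lemma pmfOf_pos_of_imp (hp : ∀ ω, 0 ≤ p ω) {X : Ω → α} {Y : Ω → β} {x : α} {y : β}
    (h : ∀ ω, X ω = x → Y ω = y) (hx : 0 < pmfOf p X x) : 0 < pmfOf p Y y :=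
  hx.trans_le (pmfOf_mono hp h)

lemma log_div_mul_eq_add {q a c u v : ℝ} (hq : q ≠ 0) (ha : a ≠ 0) (hc : c ≠ 0) (hu : u ≠ 0)
    (hv : v ≠ 0) : log (q / (a * v)) = log (u / (a * c)) + log (c * q / (u * v)) := by
  rw [← log_mul (by positivity) (by positivity)]
  congr 1
  field_simp

lemma sub_le_mul_log_div {q r : ℝ} (hq : 0 ≤ q) (hr : 0 ≤ r) (h : 0 < q → 0 < r) :
    q - r ≤ q * log (q / r) := by
  rcases hq.eq_or_lt with rfl | hq
  · simpa using hr
  have hr := h hq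
  have := mul_le_mul_of_nonneg_left (self_sub_one_le_mul_log (div_nonneg hq.le hr.le)) hr.le
  field_simp at this
  linarith

section Information

variable [Fintype α] [Fintype β] [Fintype γ] (X : Ω → α) (Y : Ω → β) (Z : Ω → γ)

lemma MI_pair_eq_add_CMI (hp : ∀ ω, 0 ≤ p ω) :
    MI p X (fun ω => (Y ω, Z ω)) = MI p X Z + CMI p X Y Z := by
  have term : ∀ x y z, pmfOf p (fun ω => (X ω, Y ω, Z ω)) (x, y, z) *
        log (pmfOf p (fun ω => (X ω, Y ω, Z ω)) (x, y, z) /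
          (pmfOf p X x * pmfOf p (fun ω => (Y ω, Z ω)) (y, z))) =
      pmfOf p (fun ω => (X ω, Y ω, Z ω)) (x, y, z) *
          log (pmfOf p (fun ω => (X ω, Z ω)) (x, z) / (pmfOf p X x * pmfOf p Z z)) +
        pmfOf p (fun ω => (X ω, Y ω, Z ω)) (x, y, z) *
          log (pmfOf p Z z * pmfOf p (fun ω => (X ω, Y ω, Z ω)) (x, y, z) /
            (pmfOf p (fun ω => (X ω, Z ω)) (x, z) * pmfOf p (fun ω => (Y ω, Z ω)) (y, z))) := by
    intro x y z
    rw [← mul_add]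
    rcases (pmfOf_nonneg hp _ (x, y, z)).eq_or_lt with hq | hq
    · rw [← hq, zero_mul, zero_mul]
    have ha : 0 < pmfOf p X x := pmfOf_pos_of_imp hp (fun ω hω => by simp_all [Prod.ext_iff]) hq
    have hc : 0 < pmfOf p Z z := pmfOf_pos_of_imp hp (fun ω hω => by simp_all [Prod.ext_iff]) hq
    have hu : 0 < pmfOf p (fun ω => (X ω, Z ω)) (x, z) :=
      pmfOf_pos_of_imp hp (fun ω hω => by simp_all [Prod.ext_iff]) hq
    have hv : 0 < pmfOf p (fun ω => (Y ω, Z ω)) (y, z) :=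
      pmfOf_pos_of_imp hp (fun ω hω => by simp_all [Prod.ext_iff]) hq
    rw [log_div_mul_eq_add hq.ne' ha.ne' hc.ne' hu.ne' hv.ne']
  have hMI : MI p X Z = ∑ x, ∑ z, ∑ y, pmfOf p (fun ω => (X ω, Y ω, Z ω)) (x, y, z) *
      log (pmfOf p (fun ω => (X ω, Z ω)) (x, z) / (pmfOf p X x * pmfOf p Z z)) :=
    sum_congr rfl fun x _ => sum_congr rfl fun z _ => by rw [← sum_mul, sum_pmfOf_triple_mid]
  rw [hMI, CMI, sum_comm (s := univ (α := γ)), ← sum_add_distrib]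
  refine sum_congr rfl fun x _ => ?_
  rw [Fintype.sum_prod_type, sum_comm, ← sum_add_distrib]
  refine sum_congr rfl fun z _ => ?_
  rw [← sum_add_distrib]
  exact sum_congr rfl fun y _ => term x y z

lemma CMI_nonneg (hp : ∀ ω, 0 ≤ p ω) : 0 ≤ CMI p X Y Z := by
  refine sum_nonneg fun z _ => ?_
  set c := pmfOf p Z z
  set q := fun (x : α) (y : β) => pmfOf p (fun ω => (X ω, Y ω, Z ω)) (x, y, z)
  set u := fun x : α => pmfOf p (fun ω => (X ω, Z ω)) (x, z)
  set v := fun y : β => pmfOf p (fun ω => (Y ω, Z ω)) (y, z)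
  have gibbs : ∀ x y, q x y - u x * v y / c ≤ q x y * log (c * q x y / (u x * v y)) := by
    intro x y
    rw [mul_comm c, ← div_div_eq_mul_div (q x y) (u x * v y) c]
    have hq : 0 ≤ q x y := pmfOf_nonneg hp _ _
    have hr : 0 ≤ u x * v y / c :=
      div_nonneg (mul_nonneg (pmfOf_nonneg hp _ _) (pmfOf_nonneg hp _ _)) (pmfOf_nonneg hp _ _)
    refine sub_le_mul_log_div hq hr fun hq => ?_
    have hu : 0 < u x := pmfOf_pos_of_imp hp (fun ω hω => by simp_all [Prod.ext_iff]) hq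
    have hv : 0 < v y := pmfOf_pos_of_imp hp (fun ω hω => by simp_all [Prod.ext_iff]) hq
    have hc : 0 < c := pmfOf_pos_of_imp hp (fun ω hω => by simp_all [Prod.ext_iff]) hq
    positivity
  have hq : ∀ x, ∑ y, q x y = u x := fun x => sum_pmfOf_triple_mid X Y Z x z
  have hu : ∑ x, u x = c := sum_pmfOf_pair_left X Z z
  have hv : ∑ y, v y = c := sum_pmfOf_pair_left Y Z z
  -- With `x / 0 = 0` the case `P(z) = 0` needs no separate treatment.
  calc 0 = c - c * c / c := by rw [mul_self_div_self, sub_self]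
    _ = ∑ x, ∑ y, (q x y - u x * v y / c) := by
      simp only [sum_sub_distrib, hq, hu, ← sum_div, ← sum_mul_sum, hv]
    _ ≤ _ := sum_le_sum fun x _ => sum_le_sum fun y _ => gibbs x y

lemma CMI_eq_zero_of_condIndep (hp : ∀ ω, 0 ≤ p ω) (h : CondIndep p X Y Z) :
    CMI p X Y Z = 0 := by
  refine sum_eq_zero fun z _ => sum_eq_zero fun x _ => sum_eq_zero fun y _ => ?_
  rcases (pmfOf_nonneg hp Z z).eq_or_lt with hz | hz
  · rw [pmfOf_eq_zero_of_imp hp (fun ω hω => congrArg (fun t => t.2.2) hω) hz.symm, zero_mul]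
  · rw [← h x y z hz, Real.log_div_self, mul_zero]

lemma MI_comp_equiv {β' : Type} [Fintype β'] [DecidableEq β'] (e : β ≃ β') :
    MI p X (e ∘ Y) = MI p X Y := by
  unfold MI
  refine sum_congr rfl fun x _ => ?_
  rw [← e.sum_comp]
  refine sum_congr rfl fun y _ => ?_
  have hY : pmfOf p (e ∘ Y) (e y) = pmfOf p Y y := pmfOf_congr fun ω => e.apply_eq_iff_eq
  have hXY : pmfOf p (fun ω => (X ω, (e ∘ Y) ω)) (x, e y) =
      pmfOf p (fun ω => (X ω, Y ω)) (x, y) :=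
    pmfOf_congr fun ω => by simp [Prod.ext_iff]
  rw [hY, hXY]

lemma MI_pair_swap :
    MI p X (fun ω => (Y ω, Z ω)) = MI p X (fun ω => (Z ω, Y ω)) :=
  (MI_comp_equiv X _ (Equiv.prodComm β γ)).symm

end Information

end PaperFS

/-- a Markov blanket `M` dominates every disjoint feature subset `S`:
`I(C;M) ≥ I(C;S)`, strictly unless `I(C;M|S) = 0`. -/
theorem mb_dominates_disjoint_subsets
    {Ω ι α γ : Type} [Fintype Ω] [Fintype ι] [DecidableEq ι]
    [Fintype α] [DecidableEq α] [Fintype γ] [DecidableEq γ]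
    (p : Ω → ℝ) (hp : IsPMF p) (C : Ω → γ) (F : ι → Ω → α) (M : Finset ι)
    (hMB : ∀ S : Finset ι, S ⊆ Mᶜ → CondIndep p C (restrict F S) (restrict F M)) :
    ∀ S : Finset ι, S ⊆ Mᶜ →
      MI p C (restrict F S) ≤ MI p C (restrict F M) ∧
      (CMI p C (restrict F M) (restrict F S) ≠ 0 →
        MI p C (restrict F S) < MI p C (restrict F M)) := by
  intro S hS
  have gap : MI p C (restrict F M) =
      MI p C (restrict F S) + CMI p C (restrict F M) (restrict F S) := by
    rw [← MI_pair_eq_add_CMI _ _ _ hp.1, MI_pair_swap, MI_pair_eq_add_CMI _ _ _ hp.1,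
      CMI_eq_zero_of_condIndep _ _ _ hp.1 (hMB S hS), add_zero]
  have gap_nonneg := CMI_nonneg C (restrict F M) (restrict F S) hp.1
  exact ⟨by linarith, fun hne => by linarith [gap_nonneg.lt_of_ne' hne]⟩
end

section
/- Suppose M ⊆ F is a Markov blanket of C (C ⟂ F\M | M) and F_i ∉ M. Then I(F_i; C | F \ F_i) = 0; that is, any feature outside the Markov blanket is not strongly relevant. -/
open Finset

open PaperFS

section Aux
variable {Ω : Type} [Fintype Ω]

lemma pmf_nonneg {α : Type} [DecidableEq α] {p : Ω → ℝ} (hp : ∀ ω, 0 ≤ p ω)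
    (X : Ω → α) (x : α) : 0 ≤ pmfOf p X x :=
  Finset.sum_nonneg fun ω _ => hp ω

lemma pmf_mono {α β : Type} [DecidableEq α] [DecidableEq β] {p : Ω → ℝ}
    (hp : ∀ ω, 0 ≤ p ω) {X : Ω → α} {Y : Ω → β} {x : α} {y : β}
    (h : ∀ ω, X ω = x → Y ω = y) : pmfOf p X x ≤ pmfOf p Y y := by
  apply Finset.sum_le_sum_of_subset_of_nonneg
  · intro ω hω
    simp only [Finset.mem_filter, Finset.mem_univ, true_and] at *
    exact h ω hω
  · exact fun ω _ _ => hp ω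

lemma pmf_congr {α β : Type} [DecidableEq α] [DecidableEq β] (p : Ω → ℝ)
    {X : Ω → α} {Y : Ω → β} {x : α} {y : β} (h : ∀ ω, X ω = x ↔ Y ω = y) :
    pmfOf p X x = pmfOf p Y y := by
  unfold pmfOf
  congr 1
  ext ω
  simp [h ω]

lemma CMI_eq_zero {α β γ' : Type} [Fintype α] [Fintype β] [Fintype γ']
    [DecidableEq α] [DecidableEq β] [DecidableEq γ']
    {p : Ω → ℝ} (hp : ∀ ω, 0 ≤ p ω) {X : Ω → α} {Y : Ω → β} {Z : Ω → γ'}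
    (h : CondIndep p X Y Z) : CMI p X Y Z = 0 := by
  unfold CMI
  refine Finset.sum_eq_zero fun z _ => Finset.sum_eq_zero fun x _ =>
    Finset.sum_eq_zero fun y _ => ?_
  by_cases hz : 0 < pmfOf p Z z
  · have heq := h x y z hz
    by_cases hj : pmfOf p (fun ω => (X ω, Y ω, Z ω)) (x, y, z) = 0
    · simp [hj]
    · have hden : pmfOf p (fun ω => (X ω, Z ω)) (x, z) *
          pmfOf p (fun ω => (Y ω, Z ω)) (y, z) ≠ 0 := by
        rw [← heq]
        exact mul_ne_zero (ne_of_gt hz) hj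
      have : (pmfOf p Z z * pmfOf p (fun ω => (X ω, Y ω, Z ω)) (x, y, z)) /
          (pmfOf p (fun ω => (X ω, Z ω)) (x, z) * pmfOf p (fun ω => (Y ω, Z ω)) (y, z)) = 1 := by
        rw [heq]
        exact div_self hden
      rw [this, Real.log_one, mul_zero]
  · have hz0 : pmfOf p Z z = 0 :=
      le_antisymm (not_lt.1 hz) (pmf_nonneg hp _ _)
    have hj0 : pmfOf p (fun ω => (X ω, Y ω, Z ω)) (x, y, z) = 0 := by
      refine le_antisymm (le_trans (pmf_mono hp ?_) hz0.le) (pmf_nonneg hp _ _)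
      intro ω hω
      exact congrArg (fun q => q.2.2) hω
    simp [hj0]

end Aux

/-- a feature outside a Markov blanket is not strongly relevant:
`I(F_i; C | F \ F_i) = 0` whenever `i ∉ M`. -/
theorem outside_mb_not_strongly_relevant
    {Ω ι α γ : Type} [Fintype Ω] [Fintype ι] [DecidableEq ι]
    [Fintype α] [DecidableEq α] [Fintype γ] [DecidableEq γ]
    (p : Ω → ℝ) (hp : IsPMF p) (C : Ω → γ) (F : ι → Ω → α) (M : Finset ι)
    (hMB : ∀ S : Finset ι, S ⊆ Mᶜ → CondIndep p C (restrict F S) (restrict F M))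
    (i : ι) (hi : i ∉ M) :
    CMI p (F i) C (restrict F (({i} : Finset ι)ᶜ)) = 0 := by
  obtain ⟨hp0, -⟩ := hp
  apply CMI_eq_zero hp0
  intro a c z hz
  -- membership helpers
  have hmem : ∀ j : ι, j ≠ i → j ∈ (({i} : Finset ι)ᶜ) := by
    intro j hj; simp [hj]
  have hMne : ∀ j : ι, j ∈ M → j ≠ i := fun j hj h => hi (h ▸ hj)
  -- the values of the sub-blocks determined by z
  set m : {j // j ∈ M} → α := fun j => z ⟨j.1, hmem j.1 (hMne j.1 j.2)⟩ with hm
  have hsd : ∀ j : ι, j ∈ Mᶜ \ {i} → j ≠ i := fun j hj h =>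
    (Finset.mem_sdiff.mp hj).2 (Finset.mem_singleton.mpr h)
  set r : {j // j ∈ Mᶜ \ {i}} → α := fun j => z ⟨j.1, hmem j.1 (hsd j.1 j.2)⟩ with hr
  set w : {j // j ∈ Mᶜ} → α := fun j =>
    if h : j.1 = i then a else z ⟨j.1, hmem j.1 h⟩ with hw
  -- equivalence of events
  have key : ∀ ω, restrict F (({i} : Finset ι)ᶜ) ω = z ↔
      (restrict F (Mᶜ \ {i}) ω = r ∧ restrict F M ω = m) := by
    intro ω
    constructor
    · intro h
      refine ⟨funext fun j => ?_, funext fun j => ?_⟩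
      · exact congrFun h ⟨j.1, hmem j.1 (hsd j.1 j.2)⟩
      · exact congrFun h ⟨j.1, hmem j.1 (hMne j.1 j.2)⟩
    · rintro ⟨h1, h2⟩
      funext j
      have hji : j.1 ≠ i := Finset.notMem_singleton.mp (Finset.mem_compl.mp j.2)
      by_cases hjM : j.1 ∈ M
      · exact congrFun h2 ⟨j.1, hjM⟩
      · have hjmem : j.1 ∈ Mᶜ \ {i} := by
          simp [Finset.mem_sdiff, hjM, hji]
        exact congrFun h1 ⟨j.1, hjmem⟩
  have keyw : ∀ ω, (F i ω = a ∧ restrict F (({i} : Finset ι)ᶜ) ω = z) ↔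
      (restrict F Mᶜ ω = w ∧ restrict F M ω = m) := by
    intro ω
    constructor
    · rintro ⟨ha, hzω⟩
      refine ⟨funext fun j => ?_, funext fun j => ?_⟩
      · by_cases h : j.1 = i
        · show F j.1 ω = w j
          rw [hw]; simp only [h, dif_pos]; exact ha
        · show F j.1 ω = w j
          rw [hw]; simp only [h, dif_neg, not_false_iff]
          exact congrFun hzω ⟨j.1, hmem j.1 h⟩
      · exact congrFun hzω ⟨j.1, hmem j.1 (hMne j.1 j.2)⟩
    · rintro ⟨h1, h2⟩
      have hiMc : i ∈ Mᶜ := Finset.mem_compl.mpr hi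
      have ha : F i ω = a := by
        have h3 := congrFun h1 ⟨i, hiMc⟩
        rw [hw] at h3
        simpa [PaperFS.restrict] using h3
      refine ⟨ha, funext fun j => ?_⟩
      have hji : j.1 ≠ i := Finset.notMem_singleton.mp (Finset.mem_compl.mp j.2)
      by_cases hjM : j.1 ∈ M
      · exact congrFun h2 ⟨j.1, hjM⟩
      · have h3 := congrFun h1 ⟨j.1, Finset.mem_compl.mpr hjM⟩
        rw [hw] at h3
        simpa [PaperFS.restrict, hji] using h3
  -- translate all four pmfs
  have e1 : pmfOf p (restrict F (({i} : Finset ι)ᶜ)) z =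
      pmfOf p (fun ω => (restrict F (Mᶜ \ {i}) ω, restrict F M ω)) (r, m) := by
    apply pmf_congr
    intro ω
    rw [Prod.mk.injEq]
    exact key ω
  have e2 : pmfOf p (fun ω => (F i ω, C ω, restrict F (({i} : Finset ι)ᶜ) ω)) (a, c, z) =
      pmfOf p (fun ω => (C ω, restrict F Mᶜ ω, restrict F M ω)) (c, w, m) := by
    apply pmf_congr
    intro ω
    simp only [Prod.mk.injEq]
    constructor
    · rintro ⟨h1, h2, h3⟩
      exact ⟨h2, (keyw ω).1 ⟨h1, h3⟩⟩
    · rintro ⟨h1, h2, h3⟩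
      obtain ⟨ha, hz'⟩ := (keyw ω).2 ⟨h2, h3⟩
      exact ⟨ha, h1, hz'⟩
  have e3 : pmfOf p (fun ω => (F i ω, restrict F (({i} : Finset ι)ᶜ) ω)) (a, z) =
      pmfOf p (fun ω => (restrict F Mᶜ ω, restrict F M ω)) (w, m) := by
    apply pmf_congr
    intro ω
    rw [Prod.mk.injEq, Prod.mk.injEq]
    exact keyw ω
  have e4 : pmfOf p (fun ω => (C ω, restrict F (({i} : Finset ι)ᶜ) ω)) (c, z) =
      pmfOf p (fun ω => (C ω, restrict F (Mᶜ \ {i}) ω, restrict F M ω)) (c, r, m) := by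
    apply pmf_congr
    intro ω
    simp only [Prod.mk.injEq]
    constructor
    · rintro ⟨h1, h2⟩
      exact ⟨h1, (key ω).1 h2⟩
    · rintro ⟨h1, h2, h3⟩
      exact ⟨h1, (key ω).2 ⟨h2, h3⟩⟩
  -- positivity of P(m)
  have hmpos : 0 < pmfOf p (restrict F M) m := by
    refine lt_of_lt_of_le hz (pmf_mono hp0 ?_)
    intro ω hω
    funext j
    exact congrFun hω ⟨j.1, hmem j.1 (hMne j.1 j.2)⟩
  -- the two instances of the Markov blanket property
  have h1 := hMB Mᶜ (le_refl _) c w m hmpos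
  have h2 := hMB (Mᶜ \ {i}) (Finset.sdiff_subset) c r m hmpos
  -- weak union
  rw [e1, e2, e3, e4]
  have hcwm := h1
  have hcrm := h2
  -- goal: P(r,m) * P(c,w,m) = P(w,m) * P(c,r,m)
  have hfinal : pmfOf p (fun ω => (restrict F (Mᶜ \ {i}) ω, restrict F M ω)) (r, m) *
      pmfOf p (fun ω => (C ω, restrict F Mᶜ ω, restrict F M ω)) (c, w, m) =
      pmfOf p (fun ω => (restrict F Mᶜ ω, restrict F M ω)) (w, m) *
      pmfOf p (fun ω => (C ω, restrict F (Mᶜ \ {i}) ω, restrict F M ω)) (c, r, m) := by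
    apply mul_left_cancel₀ (ne_of_gt hmpos)
    calc pmfOf p (restrict F M) m *
          (pmfOf p (fun ω => (restrict F (Mᶜ \ {i}) ω, restrict F M ω)) (r, m) *
            pmfOf p (fun ω => (C ω, restrict F Mᶜ ω, restrict F M ω)) (c, w, m))
        = pmfOf p (fun ω => (restrict F (Mᶜ \ {i}) ω, restrict F M ω)) (r, m) *
            (pmfOf p (restrict F M) m *
              pmfOf p (fun ω => (C ω, restrict F Mᶜ ω, restrict F M ω)) (c, w, m)) := by ring
      _ = pmfOf p (fun ω => (restrict F (Mᶜ \ {i}) ω, restrict F M ω)) (r, m) *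
            (pmfOf p (fun ω => (C ω, restrict F M ω)) (c, m) *
              pmfOf p (fun ω => (restrict F Mᶜ ω, restrict F M ω)) (w, m)) := by rw [hcwm]
      _ = pmfOf p (fun ω => (restrict F Mᶜ ω, restrict F M ω)) (w, m) *
            (pmfOf p (fun ω => (C ω, restrict F M ω)) (c, m) *
              pmfOf p (fun ω => (restrict F (Mᶜ \ {i}) ω, restrict F M ω)) (r, m)) := by ring
      _ = pmfOf p (fun ω => (restrict F Mᶜ ω, restrict F M ω)) (w, m) *
            (pmfOf p (restrict F M) m *
              pmfOf p (fun ω => (C ω, restrict F (Mᶜ \ {i}) ω, restrict F M ω)) (c, r, m)) := by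
            rw [hcrm]
      _ = pmfOf p (restrict F M) m *
            (pmfOf p (fun ω => (restrict F Mᶜ ω, restrict F M ω)) (w, m) *
              pmfOf p (fun ω => (C ω, restrict F (Mᶜ \ {i}) ω, restrict F M ω)) (c, r, m)) := by
            ring
  exact hfinal
end
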